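/- arXiv:2112.13020 — 3 statements merged into one kernel-verified Lean document; each statement's English description precedes it below -/
import Mathlib

section
/- For every integer N ≥ 1 and every c ∈ [0,1], μ^N{ ω ∈ Ω^N : μ{ u ∈ Ω : sol(u) ≤ max_{1 ≤ i ≤ N} sol(ωᵢ) } < c } ≤ c^N. (The probability that the maximum of N i.i.d. samples of sol fails to dominate a μ-fraction c of all instantiations is at most c^N; in particular, the failure probability of the scenario bound decays exponentially in N.) -/
/-!
Write `F t = μ {sol ≤ t}`, a monotone function. If `F` of the largest sample is below `c`, then so
is `F` of every sample, so by independence the failure probability is at most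
`μ {F ∘ sol < c} ^ N`. The set `{t | F t < c}` is a lower set of `ℝ`: each compact subset lies
below its maximum `k`, hence has `sol`-pushforward mass at most `F k < c`, and inner regularity of
the pushforward gives `μ {F ∘ sol < c} ≤ c`.
-/

open MeasureTheory Set

theorem IsLowerSet.measure_le_of_forall_measure_Iic_le {α : Type*} [TopologicalSpace α]
    [MeasurableSpace α] [OpensMeasurableSpace α] [LinearOrder α] [OrderClosedTopology α]
    {ν : Measure α} [ν.InnerRegular] {S : Set α} (hS : IsLowerSet S) {m : ENNReal}
    (h : ∀ t ∈ S, ν (Iic t) ≤ m) : ν S ≤ m := by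
  rw [hS.ordConnected.measurableSet.measure_eq_iSup_isCompact]
  refine iSup₂_le fun K hKS => iSup_le fun hK => ?_
  obtain rfl | hne := K.eq_empty_or_nonempty
  · simp
  obtain ⟨k, hkK, hk⟩ := hK.exists_isGreatest hne
  exact (measure_mono hk).trans (h k (hKS hkK))

theorem measure_setOf_toReal_measure_le_lt_le {Ω : Type*} [MeasurableSpace Ω] (μ : Measure Ω)
    [IsFiniteMeasure μ] {X : Ω → ℝ} (hX : Measurable X) (c : ℝ) :
    μ {u | (μ {v | X v ≤ X u}).toReal < c} ≤ ENNReal.ofReal c := by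
  set ν := μ.map X
  have hν : ∀ t, ν (Iic t) = μ {v | X v ≤ t} := fun t => Measure.map_apply hX measurableSet_Iic
  set S := {t : ℝ | (ν (Iic t)).toReal < c}
  have hS : IsLowerSet S := fun a b hba ha =>
    (ENNReal.toReal_mono (measure_ne_top ν _) (measure_mono (Iic_subset_Iic.2 hba))).trans_lt ha
  calc μ {u | (μ {v | X v ≤ X u}).toReal < c} = ν S := by
        rw [Measure.map_apply hX hS.ordConnected.measurableSet]
        simp only [S, hν, preimage_ofPred_eq]
    _ ≤ ENNReal.ofReal c := hS.measure_le_of_forall_measure_Iic_le fun t ht =>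
        ENNReal.ofReal_toReal (measure_ne_top ν _) ▸ ENNReal.ofReal_le_ofReal ht.le

/-- The probability that the maximum of `N` i.i.d. samples of `sol` fails to dominate a
`μ`-fraction `c` of all instantiations is at most `c^N`. -/
theorem scenario_failure_bound
    {Ω : Type*} [MeasurableSpace Ω] (μ : Measure Ω) [IsProbabilityMeasure μ]
    (sol : Ω → ℝ) (hsol : Measurable sol)
    (N : ℕ) (hN : 1 ≤ N) (c : ℝ) (hc : c ∈ Set.Icc (0 : ℝ) 1) :
    (Measure.pi (fun _ : Fin N => μ))
        {ω : Fin N → Ω |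
          (μ {u : Ω | sol u ≤
            Finset.univ.sup' (Finset.univ_nonempty_iff.mpr ⟨⟨0, hN⟩⟩)
              (fun i : Fin N => sol (ω i))}).toReal < c}
      ≤ ENNReal.ofReal (c ^ N) := by
  set F : ℝ → ℝ := fun t => (μ {u | sol u ≤ t}).toReal
  have hF : Monotone F := fun a b hab =>
    ENNReal.toReal_mono (measure_ne_top μ _) (measure_mono fun u hu => le_trans hu hab)
  calc _ ≤ Measure.pi (fun _ : Fin N => μ) (univ.pi fun _ => {u | F (sol u) < c}) :=
        measure_mono fun ω hω i _ => (hF (Finset.le_sup' _ (Finset.mem_univ i))).trans_lt hω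
    _ = μ {u | F (sol u) < c} ^ N := by simp [Measure.pi_pi]
    _ ≤ ENNReal.ofReal c ^ N := by
        gcongr
        exact measure_setOf_toReal_measure_le_lt_le μ hsol c
    _ = ENNReal.ofReal (c ^ N) := (ENNReal.ofReal_pow hc.1 N).symm
end

section
/- Fix an integer N ≥ 1, a confidence probability β ∈ (0,1), a threshold λ ∈ ℝ, and numbers t*(k) as in the context. For ω ∈ Ω^N let N_viol(ω) = #{ i : sol(ωᵢ) > λ }, and when N_viol(ω) < N let τ⁺(ω) = max{ sol(ωᵢ) : sol(ωᵢ) ≤ λ } (the maximum solution among the satisfying samples). Then the μ^N-measure of the set of ω ∈ Ω^N such that either N_viol(ω) = N, or μ{ u ∈ Ω : sol(u) ≤ τ⁺(ω) } ≥ t*(N_viol(ω)), is at least β. (Lemma 2: with confidence at least β, a fresh sample u satisfies sol(u) ≤ τ⁺ with probability at least t*(N_viol).) -/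
/-!
Let `F` be the distribution function of `sol` and `k = N_viol(ω) < N`. If `F(τ⁺(ω)) < t*(k)`,
every satisfying sample lies in `A_k = {u | F (sol u) < t*(k)}`, so at most `k` samples fall
outside `A_k`. By the probability integral transform `μ(A_k) ≤ t*(k)`; the probability of at most
`k` of `N` independent samples missing `A_k` is a binomial tail, increasing in `μ(A_k)`, hence at
most its value `(1 - β) / N` at `t*(k)`. A union bound over `k < N` bounds the failure probability
by `1 - β`.
-/

open MeasureTheory ProbabilityTheory Finset

/-- The probability of at most `k` failures in `n` independent trials with success
probability `p`. -/
noncomputable def binomTail (n k : ℕ) (p : ℝ) : ℝ :=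
  ∑ i ∈ range (k + 1), (n.choose i : ℝ) * (1 - p) ^ i * p ^ (n - i)

theorem hasDerivAt_binomTail (n k : ℕ) (p : ℝ) :
    HasDerivAt (binomTail n k)
      ((k + 1) * n.choose (k + 1) * (1 - p) ^ k * p ^ (n - (k + 1))) p := by
  induction k with
  | zero =>
    have h : binomTail n 0 = fun p => p ^ n := by ext; simp [binomTail]
    simpa [h] using hasDerivAt_pow n p
  | succ k ih =>
    have hterm : HasDerivAt
        (fun p : ℝ => (n.choose (k + 1) : ℝ) * (1 - p) ^ (k + 1) * p ^ (n - (k + 1)))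
        (n.choose (k + 1) * (-((k + 1 : ℕ) * (1 - p) ^ k) * p ^ (n - (k + 1)) +
          (1 - p) ^ (k + 1) * ((n - (k + 1) : ℕ) * p ^ (n - (k + 2))))) p := by
      have h1 := ((hasDerivAt_id p).const_sub 1).fun_pow (k + 1)
      have h2 := hasDerivAt_pow (n - (k + 1)) p
      rw [show n - (k + 1) - 1 = n - (k + 2) by omega] at h2
      simpa [mul_assoc] using (h1.fun_mul h2).const_mul (n.choose (k + 1) : ℝ)
    have hchoose : (n.choose (k + 1 + 1) : ℝ) * (k + 1 + 1) =
        n.choose (k + 1) * (n - (k + 1) : ℕ) := by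
      exact_mod_cast Nat.choose_succ_right_eq n (k + 1)
    have h : binomTail n (k + 1) = fun p => binomTail n k p +
        (n.choose (k + 1) : ℝ) * (1 - p) ^ (k + 1) * p ^ (n - (k + 1)) := by
      ext; simp [binomTail, sum_range_succ]
    rw [h]
    refine (ih.fun_add hterm).congr_deriv ?_
    push_cast
    linear_combination (-(1 - p) ^ (k + 1) * p ^ (n - (k + 2))) * hchoose

theorem monotoneOn_binomTail (n k : ℕ) : MonotoneOn (binomTail n k) (Set.Icc 0 1) := by
  refine monotoneOn_of_hasDerivWithinAt_nonneg (convex_Icc 0 1)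
    (fun p _ => (hasDerivAt_binomTail n k p).continuousAt.continuousWithinAt)
    (fun p _ => (hasDerivAt_binomTail n k p).hasDerivWithinAt) fun p hp => ?_
  rw [interior_Icc] at hp
  have : 0 ≤ 1 - p := by linarith [hp.2]
  have : 0 ≤ p := hp.1.le
  positivity

/-- Right continuity of the cdf covers `{x | cdf ν x < t}` by the countable chain of the
`Iic q` with `q` rational and `cdf ν q < t`. -/
theorem measure_setOf_cdf_lt_le (ν : Measure ℝ) [IsProbabilityMeasure ν] (t : ℝ) :
    ν {x | cdf ν x < t} ≤ ENNReal.ofReal t := by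
  have hcover : {x | cdf ν x < t} ⊆ ⋃ q : {q : ℚ // cdf ν q < t}, Set.Iic (q : ℝ) := by
    intro x hx
    obtain ⟨u, hxu, hu⟩ := mem_nhdsGE_iff_exists_Ico_subset.1
      (((cdf ν).right_continuous x).preimage_mem_nhdsWithin (Iio_mem_nhds hx))
    obtain ⟨q, hxq, hqu⟩ := exists_rat_btwn (Set.mem_Ioi.1 hxu)
    exact Set.mem_iUnion.2 ⟨⟨q, hu ⟨hxq.le, hqu⟩⟩, hxq.le⟩
  have hdir : Directed (· ⊆ ·) fun q : {q : ℚ // cdf ν q < t} => Set.Iic (q : ℝ) :=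
    (monotone_Iic.comp (Rat.cast_mono.comp (Subtype.mono_coe _))).directed_le
  calc ν {x | cdf ν x < t} ≤ ν (⋃ q : {q : ℚ // cdf ν q < t}, Set.Iic (q : ℝ)) :=
        measure_mono hcover
    _ = ⨆ q : {q : ℚ // cdf ν q < t}, ν (Set.Iic (q : ℝ)) := hdir.measure_iUnion
    _ ≤ ENNReal.ofReal t := iSup_le fun q => by
        rw [← ofReal_cdf]
        exact ENNReal.ofReal_le_ofReal q.2.le

section Product

variable {ι : Type*} [Fintype ι]

theorem sum_card_le_pow_mul_pow_eq_binomTail (k : ℕ) (p : ℝ) :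
    ∑ T : Finset ι with #T ≤ k, (1 - p) ^ #T * p ^ (Fintype.card ι - #T) =
      binomTail (Fintype.card ι) k p := by
  classical
  set n := Fintype.card ι
  calc _ = ∑ m ∈ range (n + 1),
        n.choose m • if m ≤ k then (1 - p) ^ m * p ^ (n - m) else 0 := by
        rw [sum_filter, ← powerset_univ,
          sum_powerset_apply_card (fun m => if m ≤ k then (1 - p) ^ m * p ^ (n - m) else 0),
          card_univ]
    _ = ∑ m ∈ range (n + 1) with m ≤ k, (n.choose m : ℝ) * (1 - p) ^ m * p ^ (n - m) := by
        simp only [sum_filter, smul_ite, smul_zero, nsmul_eq_mul, mul_assoc]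
    _ = binomTail n k p := by
        refine sum_subset (fun m => by simp) fun m hm hmn => ?_
        rw [Nat.choose_eq_zero_of_lt (by simp at hm hmn; omega), Nat.cast_zero, zero_mul,
          zero_mul]

open scoped Classical in
theorem measureReal_pi_card_notMem_le_eq_binomTail {Ω : Type*} [MeasurableSpace Ω]
    (μ : Measure Ω) [IsProbabilityMeasure μ] {A : Set Ω} (hA : MeasurableSet A) (k : ℕ) :
    (Measure.pi fun _ : ι => μ).real {ω | #{i | ω i ∉ A} ≤ k} =
      binomTail (Fintype.card ι) k (μ.real A) := by
  set failures : (ι → Ω) → Finset ι := fun ω => {i | ω i ∉ A}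
  have hfiber (T : Finset ι) :
      failures ⁻¹' {T} = Set.univ.pi fun i => if i ∈ T then Aᶜ else A := by
    ext ω
    simp only [Set.mem_preimage, Set.mem_singleton_iff, Set.mem_univ_pi, Finset.ext_iff,
      failures, mem_filter, mem_univ, true_and]
    refine forall_congr' fun i => ?_
    split_ifs with hi <;> simp [hi]
  have hevent : {ω | #(failures ω) ≤ k} =
      ⋃ T ∈ (univ.filter fun T : Finset ι => #T ≤ k), failures ⁻¹' {T} := by
    ext ω; simp
  rw [← sum_card_le_pow_mul_pow_eq_binomTail, hevent,
    measureReal_biUnion_finset (Set.pairwiseDisjoint_fiber _ _)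
      fun T _ => hfiber T ▸ MeasurableSet.univ_pi fun i => by split_ifs <;> simp [hA]]
  refine sum_congr rfl fun T _ => ?_
  rw [hfiber, measureReal_def, Measure.pi_pi]
  simp only [apply_ite μ, prod_ite, prod_const, ENNReal.toReal_mul, ENNReal.toReal_pow,
    ← measureReal_def, probReal_compl_eq_one_sub hA]
  rw [filter_mem_eq_inter, univ_inter, ← compl_filter, filter_mem_eq_inter, univ_inter,
    card_compl]

open scoped Classical in
theorem measureReal_pi_card_notMem_cdf_lt_le_binomTail {Ω : Type*} [MeasurableSpace Ω]
    (μ : Measure Ω) [IsProbabilityMeasure μ] {X : Ω → ℝ} (hX : Measurable X) {t : ℝ}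
    (ht : t ∈ Set.Icc 0 1) (k : ℕ) :
    (Measure.pi fun _ : ι => μ).real
        {ω | #{i | ω i ∉ X ⁻¹' {x | cdf (μ.map X) x < t}} ≤ k} ≤
      binomTail (Fintype.card ι) k t := by
  have : IsProbabilityMeasure (μ.map X) := Measure.isProbabilityMeasure_map hX.aemeasurable
  have hlevel : MeasurableSet {x | cdf (μ.map X) x < t} :=
    measurableSet_lt (monotone_cdf _).measurable measurable_const
  have hA : μ.real (X ⁻¹' {x | cdf (μ.map X) x < t}) ≤ t := by
    rw [← map_measureReal_apply hX hlevel]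
    exact ENNReal.toReal_le_of_le_ofReal ht.1 (measure_setOf_cdf_lt_le _ t)
  rw [measureReal_pi_card_notMem_le_eq_binomTail μ (hX hlevel)]
  exact monotoneOn_binomTail _ k ⟨measureReal_nonneg, measureReal_le_one⟩ ht hA

theorem card_filter_not_lt_le_card_filter_lt (g : ι → ℝ) {F : ℝ → ℝ} (hF : Monotone F)
    {lam t : ℝ} (h : F (sSup (g '' {i | g i ≤ lam})) < t) :
    #{i | ¬F (g i) < t} ≤ #{i | lam < g i} := by
  refine card_le_card fun i => ?_
  simp only [mem_filter, mem_univ, true_and]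
  contrapose!
  intro hi
  have hle : g i ≤ sSup (g '' {i | g i ≤ lam}) :=
    le_csSup (Set.toFinite _).bddAbove ⟨i, hi, rfl⟩
  exact (hF hle).trans_lt h

end Product

theorem ofReal_le_measure_of_measureReal_compl_le {α : Type*} [MeasurableSpace α]
    {μ : Measure α} [IsProbabilityMeasure μ] {s : Set α} {b : ℝ}
    (h : μ.real sᶜ ≤ 1 - b) :
    ENNReal.ofReal b ≤ μ s := by
  have hunion := measureReal_union_le (μ := μ) s sᶜ
  rw [Set.union_compl_self, probReal_univ] at hunion
  rw [ENNReal.ofReal_le_iff_le_toReal (measure_ne_top μ s), ← measureReal_def]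
  linarith

theorem scenario_discarded_bound_general
    {Ω : Type*} [MeasurableSpace Ω] (μ : Measure Ω) [IsProbabilityMeasure μ]
    (sol : Ω → ℝ) (hsol : Measurable sol)
    (N : ℕ) (hN : 1 ≤ N) (β : ℝ) (lam : ℝ)
    (tstar : ℕ → ℝ)
    (htstar_mem : ∀ k, k ≤ N - 1 → tstar k ∈ Set.Icc (0 : ℝ) 1)
    (htstar_eq : ∀ k, k ≤ N - 1 →
      ∑ i ∈ Finset.range (k + 1),
        (N.choose i : ℝ) * (1 - tstar k) ^ i * (tstar k) ^ (N - i) = (1 - β) / N) :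
    ENNReal.ofReal β ≤
      (Measure.pi (fun _ : Fin N => μ))
        {ω : Fin N → Ω |
          (Finset.univ.filter (fun i : Fin N => lam < sol (ω i))).card = N ∨
          tstar ((Finset.univ.filter (fun i : Fin N => lam < sol (ω i))).card) ≤
            (μ {u : Ω | sol u ≤
              sSup ((fun i : Fin N => sol (ω i)) ''
                {i : Fin N | sol (ω i) ≤ lam})}).toReal} := by
  classical
  set ν := μ.map sol
  have : IsProbabilityMeasure ν := Measure.isProbabilityMeasure_map hsol.aemeasurable
  set π := Measure.pi fun _ : Fin N => μ
  set E : ℕ → Set (Fin N → Ω) := fun k =>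
    {ω | #{i | ω i ∉ sol ⁻¹' {x | cdf ν x < tstar k}} ≤ k}
  have hcdf (x : ℝ) : (μ {u | sol u ≤ x}).toReal = cdf ν x := by
    rw [cdf_eq_real, map_measureReal_apply hsol measurableSet_Iic]; rfl
  have hfew (k : ℕ) (hk : k < N) : π.real (E k) ≤ (1 - β) / N := by
    have h := measureReal_pi_card_notMem_cdf_lt_le_binomTail (ι := Fin N) μ hsol
      (htstar_mem k (by omega)) k
    rwa [Fintype.card_fin, binomTail, htstar_eq k (by omega)] at h
  apply ofReal_le_measure_of_measureReal_compl_le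
  calc _ ≤ π.real (⋃ k ∈ range N, E k) := by
        refine measureReal_mono (fun ω hω => ?_) (measure_ne_top _ _)
        simp only [Set.mem_compl_iff, Set.mem_ofPred_eq, not_or, not_le, hcdf] at hω
        obtain ⟨hne, hlt⟩ := hω
        have hk := (card_le_univ _ |>.trans_eq (Fintype.card_fin N)).lt_of_ne hne
        refine Set.mem_biUnion (mem_range.2 hk) ((card_le_card fun i => ?_).trans
          (card_filter_not_lt_le_card_filter_lt _ (monotone_cdf ν) hlt))
        simp
    _ ≤ ∑ k ∈ range N, π.real (E k) := measureReal_biUnion_finset_le _ _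
    _ ≤ ∑ k ∈ range N, (1 - β) / N := sum_le_sum fun k hk => hfew k (mem_range.1 hk)
    _ = 1 - β := by
        rw [sum_const, card_range, nsmul_eq_mul, mul_div_cancel₀ _ (by positivity)]

/-- **Lemma 2.** With confidence at least `β`, a fresh sample `u` satisfies `sol u ≤ τ⁺`
with probability at least `t*(N_viol)`, where `τ⁺` is the maximum solution among the
samples satisfying the specification (well-defined whenever `N_viol < N`; here expressed
via `sSup`, which coincides with that maximum in this case). -/
theorem scenario_discarded_bound
    {Ω : Type*} [MeasurableSpace Ω] (μ : Measure Ω) [IsProbabilityMeasure μ]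
    (sol : Ω → ℝ) (hsol : Measurable sol)
    (N : ℕ) (hN : 1 ≤ N) (β : ℝ) (hβ : β ∈ Set.Ioo (0 : ℝ) 1) (lam : ℝ)
    (tstar : ℕ → ℝ)
    (htstar_mem : ∀ k, k ≤ N - 1 → tstar k ∈ Set.Icc (0 : ℝ) 1)
    (htstar_eq : ∀ k, k ≤ N - 1 →
      ∑ i ∈ Finset.range (k + 1),
        (N.choose i : ℝ) * (1 - tstar k) ^ i * (tstar k) ^ (N - i) = (1 - β) / N)
    (htstar_N : tstar N = 0) :
    ENNReal.ofReal β ≤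
      (Measure.pi (fun _ : Fin N => μ))
        {ω : Fin N → Ω |
          (Finset.univ.filter (fun i : Fin N => lam < sol (ω i))).card = N ∨
          tstar ((Finset.univ.filter (fun i : Fin N => lam < sol (ω i))).card) ≤
            (μ {u : Ω | sol u ≤
              sSup ((fun i : Fin N => sol (ω i)) ''
                {i : Fin N | sol (ω i) ≤ lam})}).toReal} :=
  scenario_discarded_bound_general μ sol hsol N hN β lam tstar htstar_mem htstar_eq
end

section
/- Fix an integer N ≥ 1, a confidence probability β ∈ (0,1), a threshold λ ∈ ℝ, and numbers t*(k) as in the context. For ω ∈ Ω^N let N_sat(ω) = #{ i ∈ {1,…,N} : sol(ωᵢ) ≤ λ } be the number of samples satisfying the specification. Then μ^N{ ω ∈ Ω^N : μ{ u ∈ Ω : sol(u) ≤ λ } ≤ 1 − t*(N_sat(ω)) } ≥ β. (Remark 1: applying Theorem 2 to the negated specification sol(u) > λ yields, with confidence at least β, an upper bound 1 − t*(N_sat) on the satisfaction probability.) -/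
/-!
With `p = μ {sol ≤ λ}`, the number of satisfying samples is binomially distributed with
parameters `N` and `p`. The bound can only fail on the event `N_sat = k` for some `k < N` with
`p > 1 - t*(k)` (for `k = N` it reads `p ≤ 1`). The binomial CDF `x ↦ P(Bin(N, x) ≤ k)` is
decreasing, so such an event has probability at most `P(Bin(N, p) ≤ k) ≤ P(Bin(N, 1 - t*(k)) ≤ k)
= (1 - β) / N`, and a union bound over `k < N` leaves failure probability at most `1 - β`.
-/

open MeasureTheory Finset
open scoped ENNReal

noncomputable def binomialCDF (N k : ℕ) (x : ℝ) : ℝ :=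
  ∑ i ∈ range (k + 1), (N.choose i : ℝ) * x ^ i * (1 - x) ^ (N - i)

-- The derivative of the `i`-th term is `g i - g (i + 1)`, so the derivative of the sum telescopes.
lemma hasDerivAt_binomialCDF (N k : ℕ) (x : ℝ) :
    HasDerivAt (binomialCDF N k)
      (-((N.choose (k + 1) : ℝ) * (k + 1) * x ^ k * (1 - x) ^ (N - (k + 1)))) x := by
  set g : ℕ → ℝ := fun j => (N.choose j : ℝ) * j * x ^ (j - 1) * (1 - x) ^ (N - j) with hg
  have hterm (i : ℕ) : HasDerivAt (fun y : ℝ => (N.choose i : ℝ) * y ^ i * (1 - y) ^ (N - i))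
      (g i - g (i + 1)) x := by
    have hpow : HasDerivAt (fun y : ℝ => (1 - y) ^ (N - i))
        (((N - i : ℕ) : ℝ) * (1 - x) ^ (N - i - 1) * (-1)) x := by
      simpa [Function.comp_def] using
        (hasDerivAt_pow (N - i) (1 - x)).comp x ((hasDerivAt_id x).const_sub 1)
    have hchoose : (N.choose (i + 1) : ℝ) * (i + 1) = (N.choose i : ℝ) * ((N - i : ℕ) : ℝ) := by
      exact_mod_cast Nat.choose_succ_right_eq N i
    have h := ((hasDerivAt_pow i x).fun_mul hpow).const_mul (N.choose i : ℝ)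
    simp only [← mul_assoc] at h
    refine h.congr_deriv ?_
    simp only [hg, Nat.add_sub_cancel, show N - (i + 1) = N - i - 1 by omega]
    push_cast
    linear_combination x ^ i * (1 - x) ^ (N - i - 1) * hchoose
  have hsum := HasDerivAt.fun_sum fun i (_ : i ∈ range (k + 1)) => hterm i
  rw [sum_range_sub' g] at hsum
  refine hsum.congr_deriv ?_
  simp only [hg]
  push_cast
  ring_nf

lemma binomialCDF_antitoneOn (N k : ℕ) : AntitoneOn (binomialCDF N k) (Set.Icc 0 1) := by
  refine antitoneOn_of_deriv_nonpos (convex_Icc 0 1)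
    (fun x _ => (hasDerivAt_binomialCDF N k x).continuousAt.continuousWithinAt)
    (fun x _ => (hasDerivAt_binomialCDF N k x).differentiableAt.differentiableWithinAt) ?_
  intro x hx
  rw [interior_Icc] at hx
  have h1x : 0 ≤ 1 - x := by linarith [hx.2]
  rw [(hasDerivAt_binomialCDF N k x).deriv, neg_nonpos]
  have := hx.1.le
  positivity

lemma binomial_term_le_binomialCDF (N k : ℕ) {x : ℝ} (hx : x ∈ Set.Icc (0 : ℝ) 1) :
    (N.choose k : ℝ) * x ^ k * (1 - x) ^ (N - k) ≤ binomialCDF N k x := by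
  have h1x : 0 ≤ 1 - x := by linarith [hx.2]
  have := hx.1
  exact single_le_sum (f := fun i => (N.choose i : ℝ) * x ^ i * (1 - x) ^ (N - i))
    (fun i _ => by positivity) (self_mem_range_succ k)

section BinomialCount

variable {Ω ι : Type*} [Fintype ι] [DecidableEq ι] (P : Ω → Prop) [DecidablePred P]

lemma setOf_filter_eq_eq_pi (S : Finset ι) :
    {ω : ι → Ω | univ.filter (fun i => P (ω i)) = S}
      = Set.univ.pi fun i => if i ∈ S then {u | P u} else {u | ¬ P u} := by
  ext ω
  simp only [Set.mem_ofPred_eq, Set.mem_univ_pi, Finset.ext_iff, mem_filter, mem_univ, true_and]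
  refine forall_congr' fun i => ?_
  split_ifs with hi <;> simp [hi]

variable [MeasurableSpace Ω] (μ : Measure Ω)

lemma measure_pi_filter_eq [SigmaFinite μ] (S : Finset ι) :
    Measure.pi (fun _ : ι => μ) {ω | univ.filter (fun i => P (ω i)) = S}
      = μ {u | P u} ^ #S * μ {u | ¬ P u} ^ (Fintype.card ι - #S) := by
  rw [setOf_filter_eq_eq_pi, Measure.pi_pi]
  simp_rw [apply_ite μ]
  rw [prod_ite, prod_const, prod_const, filter_univ_mem,
    filter_not, filter_univ_mem, ← compl_eq_univ_sdiff, card_compl]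

lemma measure_pi_card_filter_eq [SigmaFinite μ] (hP : MeasurableSet {u | P u}) (k : ℕ) :
    Measure.pi (fun _ : ι => μ) {ω | #(univ.filter fun i => P (ω i)) = k}
      = (Fintype.card ι).choose k * (μ {u | P u} ^ k * μ {u | ¬ P u} ^ (Fintype.card ι - k)) := by
  have hunion : {ω : ι → Ω | #(univ.filter fun i => P (ω i)) = k}
      = ⋃ S ∈ powersetCard k univ, {ω | univ.filter (fun i => P (ω i)) = S} := by
    ext ω
    simp
  have hdisj : (powersetCard k (univ : Finset ι) : Set (Finset ι)).PairwiseDisjoint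
      fun S => {ω : ι → Ω | univ.filter (fun i => P (ω i)) = S} :=
    fun S _ T _ hST => Set.disjoint_left.2 fun ω hS hT => hST (hS.symm.trans hT)
  have hmeas (S : Finset ι) : MeasurableSet {ω : ι → Ω | univ.filter (fun i => P (ω i)) = S} := by
    rw [setOf_filter_eq_eq_pi]
    exact .univ_pi fun i => by split_ifs; exacts [hP, hP.compl]
  rw [hunion, measure_biUnion_finset hdisj fun S _ => hmeas S,
    sum_congr rfl fun S hS => by rw [measure_pi_filter_eq, (mem_powersetCard.1 hS).2],
    sum_const, card_powersetCard, card_univ, nsmul_eq_mul]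

lemma measure_pi_card_filter_eq_le_binomialCDF [IsProbabilityMeasure μ]
    (hP : MeasurableSet {u | P u}) (k : ℕ) {q : ℝ} (hq : q ∈ Set.Icc (0 : ℝ) 1)
    (hqp : q ≤ (μ {u | P u}).toReal) :
    Measure.pi (fun _ : ι => μ) {ω | #(univ.filter fun i => P (ω i)) = k}
      ≤ ENNReal.ofReal (binomialCDF (Fintype.card ι) k q) := by
  set p := (μ {u | P u}).toReal
  have hp : p ∈ Set.Icc (0 : ℝ) 1 := ⟨measureReal_nonneg, measureReal_le_one⟩
  have hμP : μ {u | P u} = ENNReal.ofReal p := (ENNReal.ofReal_toReal (measure_ne_top μ _)).symm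
  have hμnP : μ {u | ¬ P u} = ENNReal.ofReal (1 - p) := by
    rw [← Set.compl_ofPred, prob_compl_eq_one_sub hP, hμP, ← ENNReal.ofReal_one,
      ENNReal.ofReal_sub 1 hp.1]
  have h1p : 0 ≤ 1 - p := by linarith [hp.2]
  rw [measure_pi_card_filter_eq P μ hP, hμP, hμnP, ← ENNReal.ofReal_pow hp.1,
    ← ENNReal.ofReal_pow h1p, ← ENNReal.ofReal_mul (by positivity), ← ENNReal.ofReal_natCast,
    ← ENNReal.ofReal_mul (by positivity), ← mul_assoc]
  exact ENNReal.ofReal_le_ofReal ((binomial_term_le_binomialCDF _ k hp).trans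
    (binomialCDF_antitoneOn _ k hq hp hqp))

end BinomialCount

lemma one_sub_mul_le_measure {α : Type*} [MeasurableSpace α] (π : Measure α)
    [IsProbabilityMeasure π] (X : α → ℕ) (N : ℕ) (Q : ℕ → Prop) (hX : ∀ ω, X ω < N ∨ Q (X ω))
    {ε : ℝ≥0∞} (hε : ∀ k < N, ¬ Q k → π {ω | X ω = k} ≤ ε) :
    1 - N * ε ≤ π {ω | Q (X ω)} := by
  have hcompl : {ω | Q (X ω)}ᶜ ⊆ ⋃ k ∈ range N, {ω | X ω = k ∧ ¬ Q k} := fun ω hω => by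
    have hQ : ¬ Q (X ω) := hω
    simpa [hQ] using (hX ω).resolve_right hQ
  have hterm (k : ℕ) (hk : k ∈ range N) : π {ω | X ω = k ∧ ¬ Q k} ≤ ε := by
    by_cases hQ : Q k
    · simp [hQ]
    · simpa [hQ] using hε k (mem_range.1 hk) hQ
  have hbad : π {ω | Q (X ω)}ᶜ ≤ N * ε := calc
    π {ω | Q (X ω)}ᶜ ≤ ∑ k ∈ range N, π {ω | X ω = k ∧ ¬ Q k} :=
      (measure_mono hcompl).trans (measure_biUnion_finset_le _ _)
    _ ≤ ∑ _k ∈ range N, ε := sum_le_sum hterm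
    _ = N * ε := by rw [sum_const, card_range, nsmul_eq_mul]
  rw [tsub_le_iff_right]
  calc 1 = π Set.univ := measure_univ.symm
    _ ≤ π {ω | Q (X ω)} + π {ω | Q (X ω)}ᶜ := measure_univ_le_add_compl _
    _ ≤ π {ω | Q (X ω)} + N * ε := add_le_add_right hbad _

/-- **Remark 1.** Applying Theorem 2 to the negated specification `sol u > lam` yields,
with confidence at least `β`, an upper bound `1 − t*(N_sat)` on the satisfaction
probability, where `N_sat` is the number of satisfying samples. -/
theorem scenario_upper_bound
    {Ω : Type*} [MeasurableSpace Ω] (μ : Measure Ω) [IsProbabilityMeasure μ]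
    (sol : Ω → ℝ) (hsol : Measurable sol)
    (N : ℕ) (hN : 1 ≤ N) (β : ℝ) (hβ : β ∈ Set.Ioo (0 : ℝ) 1) (lam : ℝ)
    (tstar : ℕ → ℝ)
    (htstar_mem : ∀ k, k ≤ N - 1 → tstar k ∈ Set.Icc (0 : ℝ) 1)
    (htstar_eq : ∀ k, k ≤ N - 1 →
      ∑ i ∈ Finset.range (k + 1),
        (N.choose i : ℝ) * (1 - tstar k) ^ i * (tstar k) ^ (N - i) = (1 - β) / N)
    (htstar_N : tstar N = 0) :
    ENNReal.ofReal β ≤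
      (Measure.pi (fun _ : Fin N => μ))
        {ω : Fin N → Ω |
          (μ {u : Ω | sol u ≤ lam}).toReal ≤
            1 - tstar ((Finset.univ.filter (fun i : Fin N => sol (ω i) ≤ lam)).card)} := by
  set p := (μ {u : Ω | sol u ≤ lam}).toReal
  have hS : MeasurableSet {u : Ω | sol u ≤ lam} := measurableSet_le hsol measurable_const
  have hcount (ω : Fin N → Ω) : #(univ.filter fun i => sol (ω i) ≤ lam) < N
      ∨ p ≤ 1 - tstar #(univ.filter fun i => sol (ω i) ≤ lam) := by
    have hle := (card_filter_le univ fun i => sol (ω i) ≤ lam).trans_eq (card_fin N)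
    rcases hle.lt_or_eq with hlt | heq
    · exact .inl hlt
    · exact .inr (by rw [heq, htstar_N, sub_zero]; exact measureReal_le_one)
  have hrare (k : ℕ) (hk : k < N) (hbad : ¬ p ≤ 1 - tstar k) :
      Measure.pi (fun _ : Fin N => μ) {ω | #(univ.filter fun i => sol (ω i) ≤ lam) = k}
        ≤ ENNReal.ofReal ((1 - β) / N) := by
    have ht := htstar_mem k (by omega)
    calc _ ≤ ENNReal.ofReal (binomialCDF N k (1 - tstar k)) := by
          have hle := measure_pi_card_filter_eq_le_binomialCDF (ι := Fin N) (fun u => sol u ≤ lam)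
            μ hS k (q := 1 - tstar k) ⟨by linarith [ht.2], by linarith [ht.1]⟩ (by linarith)
          rwa [Fintype.card_fin] at hle
      _ = ENNReal.ofReal ((1 - β) / N) := by
          rw [binomialCDF, sub_sub_cancel, htstar_eq k (by omega)]
  refine le_trans ?_ (one_sub_mul_le_measure (Measure.pi fun _ : Fin N => μ)
    (fun ω => #(univ.filter fun i => sol (ω i) ≤ lam)) N (fun k => p ≤ 1 - tstar k) hcount hrare)
  have h1β : 0 ≤ 1 - β := by linarith [hβ.2]
  rw [← ENNReal.ofReal_natCast, ← ENNReal.ofReal_mul (by positivity),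
    mul_div_cancel₀ _ (by positivity), ← ENNReal.ofReal_one, ← ENNReal.ofReal_sub _ h1β,
    sub_sub_cancel]
end
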